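/- Let (ℙ^x)_{x∈E} be a diffusion (the pushforward of ℙ^x under evaluation at time 0 is δ_x, and x ↦ ℙ^x is weakly continuous), obs : E → [0,1] continuous, and 0 < c < 1. Let h : Ω → [0,1] be a continuous function such that for every pair of trajectories ω, ω' ∈ Ω there exist an expression f of the logic L_σ and a rational time s ≥ 0 with |h(ω) − h(ω')| ≤ c^s |f(ω(s)) − f(ω'(s))|. Then for every compact subset Ω' ⊆ Ω and every ε > 0 there exists an expression g of the logic L_τ such that |h(ω) − g(ω)| ≤ ε for every ω ∈ Ω'. -/

import Mathlib

open MeasureTheory Topology Filter BoundedContinuousFunction NNReal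

noncomputable section

/-- A 1-bounded pseudometric on a type `X`. -/
structure IsPseudometric {X : Type*} (m : X → X → ℝ) : Prop where
  nonneg : ∀ x y, 0 ≤ m x y
  le_one : ∀ x y, m x y ≤ 1
  refl : ∀ x, m x x = 0
  symm : ∀ x y, m x y = m y x
  triangle : ∀ x y z, m x z ≤ m x y + m y z

/-- `γ` is a coupling of `P` and `Q`. -/
def IsCoupling {X Y : Type*} [MeasurableSpace X] [MeasurableSpace Y]
    (γ : Measure (X × Y)) (P : Measure X) (Q : Measure Y) : Prop :=
  IsProbabilityMeasure γ ∧ γ.map Prod.fst = P ∧ γ.map Prod.snd = Q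

/-- The optimal transport cost `W(c)(P,Q) = inf_{γ ∈ Γ(P,Q)} ∫ c dγ`. -/
def Wc {X : Type*} [MeasurableSpace X] (c : X → X → ℝ) (P Q : Measure X) : ℝ :=
  sInf {r : ℝ | ∃ γ : Measure (X × X), IsCoupling γ P Q ∧ r = ∫ z, c z.1 z.2 ∂γ}

/-- The space of (bounded) continuous trajectories `[0,∞) → E`, with the uniform metric. -/
abbrev Traj (E : Type*) [PseudoMetricSpace E] := BoundedContinuousFunction ℝ≥0 E

instance {E : Type*} [PseudoMetricSpace E] : MeasurableSpace (Traj E) := borel _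
instance {E : Type*} [PseudoMetricSpace E] : BorelSpace (Traj E) := ⟨rfl⟩

/-- The discounted uniform pseudometric `U_c(m)(ω,ω') = sup_{t ≥ 0} c^t · m(ω(t), ω'(t))`. -/
def Udisc {E : Type*} [PseudoMetricSpace E] (c : ℝ) (m : E → E → ℝ)
    (ω ω' : Traj E) : ℝ :=
  ⨆ t : ℝ≥0, c ^ (t : ℝ) * m (ω t) (ω' t)

/-- `P_t(x)`: the pushforward of `ℙ^x` under evaluation at time `t`. -/
def kernelAt {E : Type*} [PseudoMetricSpace E] [MeasurableSpace E]
    (ℙ : E → Measure (Traj E)) (t : ℝ≥0) (x : E) : Measure E :=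
  (ℙ x).map fun ω => ω t

/-- The functional `F_c(m)(x,y) = sup_{t ≥ 0} c^t W(m)(P_t(x), P_t(y))`. -/
def Ffun {E : Type*} [PseudoMetricSpace E] [MeasurableSpace E]
    (ℙ : E → Measure (Traj E)) (c : ℝ) (m : E → E → ℝ) (x y : E) : ℝ :=
  ⨆ t : ℝ≥0, c ^ (t : ℝ) * Wc m (kernelAt ℙ t x) (kernelAt ℙ t y)

/-- The functional `G_c(m)(x,y) = W(U_c(m))(ℙ^x, ℙ^y)`. -/
def Gfun {E : Type*} [PseudoMetricSpace E] [MeasurableSpace E]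
    (ℙ : E → Measure (Traj E)) (c : ℝ) (m : E → E → ℝ) (x y : E) : ℝ :=
  Wc (Udisc c m) (ℙ x) (ℙ y)

/-- The family `x ↦ ℙ^x` is weakly continuous: if `xₙ → x` then
`∫ F dℙ^{xₙ} → ∫ F dℙ^x` for every bounded continuous `F`. -/
def WeaklyContinuousFamily {A B : Type*} [TopologicalSpace A] [TopologicalSpace B]
    [MeasurableSpace B] (ℙ : A → Measure B) : Prop :=
  ∀ (F : B →ᵇ ℝ) (x : A) (u : ℕ → A), Tendsto u atTop (nhds x) →
    Tendsto (fun n => ∫ ω, F ω ∂(ℙ (u n))) atTop (nhds (∫ ω, F ω ∂(ℙ x)))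

mutual
/-- Expressions of the state logic `L_σ : f ::= q | obs | 1 − f | ∫ g`,
with `q ∈ [0,1] ∩ ℚ`. -/
inductive Lsig : Type where
  | const : {q : ℚ // 0 ≤ q ∧ q ≤ 1} → Lsig
  | obs : Lsig
  | compl : Lsig → Lsig
  | integ : Ltau → Lsig

/-- Expressions of the trajectory logic
`L_τ : g ::= f ∘ ev_t | min{g₁,g₂} | max{g₁,g₂} | g ⊖ q | g ⊕ q`,
with `q ∈ [0,1] ∩ ℚ` and `t ∈ ℚ≥0`. -/
inductive Ltau : Type where
  | ev : Lsig → NNRat → Ltau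
  | minE : Ltau → Ltau → Ltau
  | maxE : Ltau → Ltau → Ltau
  | subQ : Ltau → {q : ℚ // 0 ≤ q ∧ q ≤ 1} → Ltau
  | addQ : Ltau → {q : ℚ // 0 ≤ q ∧ q ≤ 1} → Ltau
end

mutual
/-- Interpretation of `L_σ` expressions as functions `E → [0,1]`. -/
def semSig {E : Type*} [PseudoMetricSpace E] [MeasurableSpace E]
    (obs : E → ℝ) (ℙ : E → Measure (Traj E)) (c : ℝ) : Lsig → E → ℝ
  | .const q => fun _ => (q.1 : ℝ)
  | .obs => fun x => obs x
  | .compl f => fun x => 1 - semSig obs ℙ c f x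
  | .integ g => fun x => ∫ ω, semTau obs ℙ c g ω ∂(ℙ x)

/-- Interpretation of `L_τ` expressions as functions `Ω → [0,1]`. -/
def semTau {E : Type*} [PseudoMetricSpace E] [MeasurableSpace E]
    (obs : E → ℝ) (ℙ : E → Measure (Traj E)) (c : ℝ) : Ltau → Traj E → ℝ
  | .ev f t => fun ω => c ^ (t : ℝ) * semSig obs ℙ c f (ω (t : ℝ≥0))
  | .minE g₁ g₂ => fun ω => min (semTau obs ℙ c g₁ ω) (semTau obs ℙ c g₂ ω)
  | .maxE g₁ g₂ => fun ω => max (semTau obs ℙ c g₁ ω) (semTau obs ℙ c g₂ ω)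
  | .subQ g q => fun ω => max 0 (semTau obs ℙ c g ω - (q.1 : ℝ))
  | .addQ g q => fun ω => min 1 (semTau obs ℙ c g ω + (q.1 : ℝ))
end

section AuxLem

variable {E : Type*} [MetricSpace E] [MeasurableSpace E] [BorelSpace E]

mutual
theorem sig_good (obs : E → ℝ) (ℙ : E → Measure (Traj E)) (c : ℝ)
    (hprob : ∀ x, IsProbabilityMeasure (ℙ x)) (hweak : WeaklyContinuousFamily ℙ)
    (hobs_cont : Continuous obs) (hobs01 : ∀ x, obs x ∈ Set.Icc (0:ℝ) 1)
    (hc0 : 0 < c) (hc1 : c ≤ 1) (f : Lsig) :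
    Continuous (semSig obs ℙ c f) ∧ ∀ x, semSig obs ℙ c f x ∈ Set.Icc (0:ℝ) 1 := by
  cases f with
  | const q =>
    refine ⟨continuous_const, fun x => ?_⟩
    simp only [semSig]
    exact ⟨by exact_mod_cast q.2.1, by exact_mod_cast q.2.2⟩
  | obs => exact ⟨hobs_cont, hobs01⟩
  | compl f =>
    obtain ⟨hf, hb⟩ := sig_good obs ℙ c hprob hweak hobs_cont hobs01 hc0 hc1 f
    refine ⟨continuous_const.sub hf, fun x => ?_⟩
    simp only [semSig]
    exact ⟨by linarith [(hb x).2], by linarith [(hb x).1]⟩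
  | integ g =>
    obtain ⟨hg, hb⟩ := tau_good obs ℙ c hprob hweak hobs_cont hobs01 hc0 hc1 g
    set F : Traj E →ᵇ ℝ := ⟨⟨semTau obs ℙ c g, hg⟩, ⟨1, fun ω ω' => by
      simp only [Real.dist_eq, ContinuousMap.coe_mk]
      have h1 := hb ω; have h2 := hb ω'
      rw [abs_sub_le_iff]; constructor <;> [linarith [h1.2, h2.1]; linarith [h2.2, h1.1]]⟩⟩
    have hFeq : ∀ ω, F ω = semTau obs ℙ c g ω := fun ω => rfl
    have heq : semSig obs ℙ c (.integ g) = fun x => ∫ ω, F ω ∂(ℙ x) := by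
      funext x; simp [semSig, hFeq]
    constructor
    · rw [heq]
      refine continuous_iff_seqContinuous.mpr ?_
      intro u x hu
      exact hweak F x u hu
    · intro x
      haveI := hprob x
      have hint : Integrable (fun ω => semTau obs ℙ c g ω) (ℙ x) := F.integrable (ℙ x)
      constructor
      · exact integral_nonneg fun ω => (hb ω).1
      · calc ∫ ω, semTau obs ℙ c g ω ∂(ℙ x) ≤ ∫ _, (1:ℝ) ∂(ℙ x) :=
              integral_mono hint (integrable_const 1) fun ω => (hb ω).2
          _ = 1 := by simp

theorem tau_good (obs : E → ℝ) (ℙ : E → Measure (Traj E)) (c : ℝ)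
    (hprob : ∀ x, IsProbabilityMeasure (ℙ x)) (hweak : WeaklyContinuousFamily ℙ)
    (hobs_cont : Continuous obs) (hobs01 : ∀ x, obs x ∈ Set.Icc (0:ℝ) 1)
    (hc0 : 0 < c) (hc1 : c ≤ 1) (g : Ltau) :
    Continuous (semTau obs ℙ c g) ∧ ∀ ω, semTau obs ℙ c g ω ∈ Set.Icc (0:ℝ) 1 := by
  cases g with
  | ev f t =>
    obtain ⟨hf, hb⟩ := sig_good obs ℙ c hprob hweak hobs_cont hobs01 hc0 hc1 f
    have hct0 : 0 ≤ c ^ ((t : ℚ≥0) : ℝ) := Real.rpow_nonneg hc0.le _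
    have hct1 : c ^ ((t : ℚ≥0) : ℝ) ≤ 1 := Real.rpow_le_one hc0.le hc1 (by positivity)
    constructor
    · exact continuous_const.mul (hf.comp (continuous_eval_const (x := ((t : ℚ≥0) : ℝ≥0))))
    · intro ω
      have h := hb (ω ((t : ℚ≥0) : ℝ≥0))
      exact ⟨mul_nonneg hct0 h.1, mul_le_one₀ hct1 h.1 h.2⟩
  | minE g₁ g₂ =>
    obtain ⟨h1, b1⟩ := tau_good obs ℙ c hprob hweak hobs_cont hobs01 hc0 hc1 g₁
    obtain ⟨h2, b2⟩ := tau_good obs ℙ c hprob hweak hobs_cont hobs01 hc0 hc1 g₂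
    exact ⟨h1.min h2, fun ω => ⟨le_min (b1 ω).1 (b2 ω).1, min_le_of_left_le (b1 ω).2⟩⟩
  | maxE g₁ g₂ =>
    obtain ⟨h1, b1⟩ := tau_good obs ℙ c hprob hweak hobs_cont hobs01 hc0 hc1 g₁
    obtain ⟨h2, b2⟩ := tau_good obs ℙ c hprob hweak hobs_cont hobs01 hc0 hc1 g₂
    exact ⟨h1.max h2, fun ω => ⟨le_max_of_le_left (b1 ω).1, max_le (b1 ω).2 (b2 ω).2⟩⟩
  | subQ g q =>
    obtain ⟨h1, b1⟩ := tau_good obs ℙ c hprob hweak hobs_cont hobs01 hc0 hc1 g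
    refine ⟨continuous_const.max (h1.sub continuous_const), fun ω => ⟨le_max_left _ _, ?_⟩⟩
    have hq : (0:ℝ) ≤ (q.1 : ℝ) := by exact_mod_cast q.2.1
    exact max_le zero_le_one (by linarith [(b1 ω).2])
  | addQ g q =>
    obtain ⟨h1, b1⟩ := tau_good obs ℙ c hprob hweak hobs_cont hobs01 hc0 hc1 g
    refine ⟨continuous_const.min (h1.add continuous_const), fun ω => ⟨?_, min_le_left _ _⟩⟩
    have hq : (0:ℝ) ≤ (q.1 : ℝ) := by exact_mod_cast q.2.1
    exact le_min zero_le_one (by linarith [(b1 ω).1])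
end

end AuxLem

section AuxLem2

variable {E : Type*} [MetricSpace E] [MeasurableSpace E] [BorelSpace E]

lemma rat_below {x δ : ℝ} (hx0 : 0 ≤ x) (hx1 : x ≤ 1) (hδ : 0 < δ) :
    ∃ q : {q : ℚ // 0 ≤ q ∧ q ≤ 1}, (q.1 : ℝ) ≤ x ∧ x - δ ≤ (q.1 : ℝ) := by
  rcases le_or_gt x δ with hxδ | hxδ
  · exact ⟨⟨0, le_refl 0, zero_le_one⟩, by simpa using hx0, by push_cast; linarith⟩
  · obtain ⟨q, hq1, hq2⟩ := exists_rat_btwn (show x - δ < x by linarith)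
    refine ⟨⟨q, ?_, ?_⟩, hq2.le, hq1.le⟩
    · have : (0:ℝ) ≤ (q:ℝ) := le_of_lt (lt_of_le_of_lt (by linarith) hq1)
      exact_mod_cast this
    · have : (q:ℝ) ≤ 1 := hq2.le.trans hx1
      exact_mod_cast this

lemma exists_inf' (obs : E → ℝ) (ℙ : E → Measure (Traj E)) (c : ℝ)
    {ι : Type*} (s : Finset ι) (hs : s.Nonempty) (G : ι → Ltau) :
    ∃ g : Ltau, ∀ ω : Traj E,
      semTau obs ℙ c g ω = s.inf' hs fun i => semTau obs ℙ c (G i) ω := by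
  induction hs using Finset.Nonempty.cons_induction with
  | singleton a => exact ⟨G a, fun ω => by simp⟩
  | cons a s ha hs ih =>
    obtain ⟨g, hg⟩ := ih
    exact ⟨(G a).minE g, fun ω => by rw [Finset.inf'_cons hs]; simp [semTau, hg ω]⟩

lemma exists_sup' (obs : E → ℝ) (ℙ : E → Measure (Traj E)) (c : ℝ)
    {ι : Type*} (s : Finset ι) (hs : s.Nonempty) (G : ι → Ltau) :
    ∃ g : Ltau, ∀ ω : Traj E,
      semTau obs ℙ c g ω = s.sup' hs fun i => semTau obs ℙ c (G i) ω := by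
  induction hs using Finset.Nonempty.cons_induction with
  | singleton a => exact ⟨G a, fun ω => by simp⟩
  | cons a s ha hs ih =>
    obtain ⟨g, hg⟩ := ih
    exact ⟨(G a).maxE g, fun ω => by rw [Finset.sup'_cons hs]; simp [semTau, hg ω]⟩

end AuxLem2

section KeyLem

variable {E : Type*} [MetricSpace E] [MeasurableSpace E] [BorelSpace E]

lemma key_pair_aux (obs : E → ℝ) (ℙ : E → Measure (Traj E)) (c : ℝ)
    (hprob : ∀ x, IsProbabilityMeasure (ℙ x)) (hweak : WeaklyContinuousFamily ℙ)
    (hobs_cont : Continuous obs) (hobs01 : ∀ x, obs x ∈ Set.Icc (0:ℝ) 1)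
    (hc0 : 0 < c) (hc1 : c ≤ 1)
    (h : Traj E → ℝ) (hh01 : ∀ ω, h ω ∈ Set.Icc (0:ℝ) 1)
    (hyp : ∀ ω ω' : Traj E, ∃ (f : Lsig) (s : NNRat), |h ω - h ω'| ≤
      c ^ (s : ℝ) * |semSig obs ℙ c f (ω (s : ℝ≥0)) - semSig obs ℙ c f (ω' (s : ℝ≥0))|)
    (ω ω' : Traj E) {δ : ℝ} (hδ : 0 < δ) (hle : h ω' ≤ h ω) :
    ∃ g : Ltau, |semTau obs ℙ c g ω - h ω| ≤ δ ∧ |semTau obs ℙ c g ω' - h ω'| ≤ δ := by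
  obtain ⟨f, s, hfs⟩ := hyp ω ω'
  have habs : |h ω - h ω'| = h ω - h ω' := abs_of_nonneg (by linarith)
  obtain ⟨g₀, hAB⟩ : ∃ g₀ : Ltau,
      h ω - h ω' ≤ semTau obs ℙ c g₀ ω - semTau obs ℙ c g₀ ω' := by
    set a := semSig obs ℙ c f (ω (s : ℝ≥0)) with ha
    set b := semSig obs ℙ c f (ω' (s : ℝ≥0)) with hb
    have hk0 : (0:ℝ) ≤ c ^ ((s : ℚ≥0) : ℝ) := Real.rpow_nonneg hc0.le _
    rcases le_total b a with hba | hab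
    · refine ⟨.ev f s, ?_⟩
      rw [habs, abs_of_nonneg (sub_nonneg.2 hba)] at hfs
      simp only [semTau, ← ha, ← hb]
      nlinarith [mul_sub (c ^ ((s : ℚ≥0) : ℝ)) a b]
    · refine ⟨.ev (.compl f) s, ?_⟩
      rw [habs, abs_of_nonpos (sub_nonpos.2 hab)] at hfs
      simp only [semTau, semSig, ← ha, ← hb]
      nlinarith [mul_sub (c ^ ((s : ℚ≥0) : ℝ)) (1 - a) (1 - b)]
  obtain ⟨_, hAmem⟩ := tau_good obs ℙ c hprob hweak hobs_cont hobs01 hc0 hc1 g₀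
  set A := semTau obs ℙ c g₀ ω with hAdef
  set B := semTau obs ℙ c g₀ ω' with hBdef
  have hA := hAmem ω; have hB := hAmem ω'
  have hBA : B ≤ A := by linarith
  obtain ⟨q₁, hq₁le, hq₁ge⟩ := rat_below hB.1 hB.2 (half_pos hδ)
  obtain ⟨p, hple, hpge⟩ :=
    rat_below (x := h ω - h ω') (sub_nonneg.2 hle)
      (by linarith [(hh01 ω).2, (hh01 ω').1]) (half_pos hδ)
  obtain ⟨q₂, hq₂le, hq₂ge⟩ := rat_below (hh01 ω').1 (hh01 ω').2 (half_pos hδ)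
  have hconst : ∀ ρ : Traj E, semTau obs ℙ c (Ltau.ev (Lsig.const p) 0) ρ = (p.1 : ℝ) := by
    intro ρ; simp [semTau, semSig]
  have hp0 : (0:ℝ) ≤ (p.1 : ℝ) := by exact_mod_cast p.2.1
  have hq₁0 : (0:ℝ) ≤ (q₁.1 : ℝ) := by exact_mod_cast q₁.2.1
  refine ⟨((g₀.subQ q₁).minE (Ltau.ev (Lsig.const p) 0)).addQ q₂, ?_, ?_⟩
  · have hval : semTau obs ℙ c (((g₀.subQ q₁).minE (Ltau.ev (Lsig.const p) 0)).addQ q₂) ω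
        = min 1 (min (max 0 (A - (q₁.1 : ℝ))) (p.1 : ℝ) + (q₂.1 : ℝ)) := by
      simp only [semTau, semSig, ← hAdef]; norm_num
    rw [hval, max_eq_right (by linarith : (0:ℝ) ≤ A - (q₁.1 : ℝ)),
      min_eq_right (show (p.1:ℝ) ≤ A - (q₁.1:ℝ) by linarith),
      min_eq_right (show (p.1:ℝ) + (q₂.1:ℝ) ≤ 1 by linarith [(hh01 ω).2])]
    rw [abs_le]; constructor <;> linarith
  · have hval : semTau obs ℙ c (((g₀.subQ q₁).minE (Ltau.ev (Lsig.const p) 0)).addQ q₂) ω'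
        = min 1 (min (max 0 (B - (q₁.1 : ℝ))) (p.1 : ℝ) + (q₂.1 : ℝ)) := by
      simp only [semTau, semSig, ← hBdef]; norm_num
    rw [hval]
    set m := min (max 0 (B - (q₁.1:ℝ))) (p.1:ℝ) with hm
    have hm0 : 0 ≤ m := le_min (le_max_left _ _) hp0
    have hmδ : m ≤ δ/2 := le_trans (min_le_left _ _) (max_le (by linarith) (by linarith))
    rcases le_total (m + (q₂.1:ℝ)) 1 with h1 | h1
    · rw [min_eq_right h1, abs_le]; constructor <;> linarith
    · rw [min_eq_left h1, abs_le]
      constructor <;> linarith [(hh01 ω').2]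

lemma key_pair (obs : E → ℝ) (ℙ : E → Measure (Traj E)) (c : ℝ)
    (hprob : ∀ x, IsProbabilityMeasure (ℙ x)) (hweak : WeaklyContinuousFamily ℙ)
    (hobs_cont : Continuous obs) (hobs01 : ∀ x, obs x ∈ Set.Icc (0:ℝ) 1)
    (hc0 : 0 < c) (hc1 : c ≤ 1)
    (h : Traj E → ℝ) (hh01 : ∀ ω, h ω ∈ Set.Icc (0:ℝ) 1)
    (hyp : ∀ ω ω' : Traj E, ∃ (f : Lsig) (s : NNRat), |h ω - h ω'| ≤
      c ^ (s : ℝ) * |semSig obs ℙ c f (ω (s : ℝ≥0)) - semSig obs ℙ c f (ω' (s : ℝ≥0))|)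
    (ω ω' : Traj E) {δ : ℝ} (hδ : 0 < δ) :
    ∃ g : Ltau, |semTau obs ℙ c g ω - h ω| ≤ δ ∧ |semTau obs ℙ c g ω' - h ω'| ≤ δ := by
  rcases le_total (h ω') (h ω) with hle | hle
  · exact key_pair_aux obs ℙ c hprob hweak hobs_cont hobs01 hc0 hc1 h hh01 hyp ω ω' hδ hle
  · obtain ⟨g, h1, h2⟩ :=
      key_pair_aux obs ℙ c hprob hweak hobs_cont hobs01 hc0 hc1 h hh01 hyp ω' ω hδ hle
    exact ⟨g, h2, h1⟩

end KeyLem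

theorem logic_approx_on_compact
    {E : Type*} [MetricSpace E] [PolishSpace E] [MeasurableSpace E] [BorelSpace E]
    (hΔ : ∀ x y : E, dist x y ≤ 1)
    (ℙ : E → Measure (Traj E)) (hprob : ∀ x, IsProbabilityMeasure (ℙ x))
    (hdirac : ∀ x : E, (ℙ x).map (fun ω => ω 0) = Measure.dirac x)
    (hweak : WeaklyContinuousFamily ℙ)
    (obs : E → ℝ) (hobs_cont : Continuous obs) (hobs01 : ∀ x, obs x ∈ Set.Icc (0 : ℝ) 1)
    (c : ℝ) (hc0 : 0 < c) (hc1 : c < 1)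
    (h : Traj E → ℝ) (hhcont : Continuous h) (hh01 : ∀ ω, h ω ∈ Set.Icc (0 : ℝ) 1)
    (hyp : ∀ ω ω' : Traj E, ∃ (f : Lsig) (s : NNRat), |h ω - h ω'| ≤
      c ^ (s : ℝ) * |semSig obs ℙ c f (ω (s : ℝ≥0)) - semSig obs ℙ c f (ω' (s : ℝ≥0))|)
    (Ω' : Set (Traj E)) (hΩ' : IsCompact Ω')
    (ε : ℝ) (hε : 0 < ε) :
    ∃ g : Ltau, ∀ ω ∈ Ω', |h ω - semTau obs ℙ c g ω| ≤ ε := by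
  rcases Ω'.eq_empty_or_nonempty with hΩe | hΩne
  · exact ⟨Ltau.ev (Lsig.const ⟨0, le_refl 0, zero_le_one⟩) 0,
      fun ω hω => by rw [hΩe] at hω; exact absurd hω (Set.notMem_empty ω)⟩
  have hc1' : c ≤ 1 := hc1.le
  have hcontT : ∀ g : Ltau, Continuous (semTau obs ℙ c g) := fun g =>
    (tau_good obs ℙ c hprob hweak hobs_cont hobs01 hc0 hc1' g).1
  have stage1 : ∀ ω : Traj E, ∃ gg : Ltau,
      (∀ ρ ∈ Ω', semTau obs ℙ c gg ρ < h ρ + ε) ∧ h ω - ε < semTau obs ℙ c gg ω := by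
    intro ω
    choose G hG1 hG2 using fun ω' =>
      key_pair obs ℙ c hprob hweak hobs_cont hobs01 hc0 hc1' h hh01 hyp ω ω' (half_pos hε)
    obtain ⟨t, htsub, htcov⟩ := hΩ'.elim_nhds_subcover
      (fun ω' => {ρ | semTau obs ℙ c (G ω') ρ < h ρ + ε})
      (fun ω' _ => (isOpen_lt (hcontT _) (hhcont.add continuous_const)).mem_nhds
        (show semTau obs ℙ c (G ω') ω' < h ω' + ε by
          have := (abs_le.1 (hG2 ω')).2; linarith))
    have ht : t.Nonempty := by
      obtain ⟨ρ₀, hρ₀⟩ := hΩne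
      obtain ⟨j, hjt, _⟩ := Set.mem_iUnion₂.1 (htcov hρ₀)
      exact ⟨j, hjt⟩
    obtain ⟨gg, hgg⟩ := exists_inf' obs ℙ c t ht G
    refine ⟨gg, ?_, ?_⟩
    · intro ρ hρ
      obtain ⟨j, hjt, hj⟩ := Set.mem_iUnion₂.1 (htcov hρ)
      calc semTau obs ℙ c gg ρ = t.inf' ht fun i => semTau obs ℙ c (G i) ρ := hgg ρ
        _ ≤ semTau obs ℙ c (G j) ρ := Finset.inf'_le _ hjt
        _ < h ρ + ε := hj
    · rw [hgg ω]
      refine (Finset.lt_inf'_iff ht).2 fun i _ => ?_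
      have := (abs_le.1 (hG1 i)).1; linarith
  choose g1 hup hlow using stage1
  obtain ⟨t', ht'sub, ht'cov⟩ := hΩ'.elim_nhds_subcover
    (fun ω => {ρ | h ρ - ε < semTau obs ℙ c (g1 ω) ρ})
    (fun ω _ => (isOpen_lt (hhcont.sub continuous_const) (hcontT _)).mem_nhds (hlow ω))
  have ht' : t'.Nonempty := by
    obtain ⟨ρ₀, hρ₀⟩ := hΩne
    obtain ⟨j, hjt, _⟩ := Set.mem_iUnion₂.1 (ht'cov hρ₀)
    exact ⟨j, hjt⟩
  obtain ⟨G, hG⟩ := exists_sup' obs ℙ c t' ht' g1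
  refine ⟨G, fun ρ hρ => ?_⟩
  obtain ⟨i, hit, hi⟩ := Set.mem_iUnion₂.1 (ht'cov hρ)
  have hup' : semTau obs ℙ c G ρ < h ρ + ε := by
    rw [hG ρ]; exact (Finset.sup'_lt_iff ht').2 fun j _ => hup j ρ hρ
  have hlow' : h ρ - ε < semTau obs ℙ c G ρ := by
    rw [hG ρ]; exact lt_of_lt_of_le hi (Finset.le_sup' (fun j => semTau obs ℙ c (g1 j) ρ) hit)
  rw [abs_le]; constructor <;> linarith
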